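/- Let E be a finite set with |E| = m, and for j = 1, …, l let A_j, B_j, C_j, D_j be subsets of E satisfying: (i) for each j, the four sets A_j, B_j, C_j, D_j are pairwise disjoint; (ii) no element of A_j ∪ B_j belongs to any of A_{j'}, B_{j'}, C_{j'}, D_{j'} for any j' > j; (iii) no element of C_j ∪ D_j belongs to any A_{j'}, C_{j'}, or D_{j'} for j' > j, and each element of C_j ∪ D_j belongs to B_{j'} for at most one index j' > j. Then ∑_{j=1}^{l} (4·|A_j| + 2·|B_j| + 2·|C_j| + 2·|D_j|) ≤ 4m. -/
import Mathlib


/-- Edge-accounting bound: if the families `A, B, C, D` of subsets of a finite set `E`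
of size `m` satisfy (i) for each `j` the sets `A j, B j, C j, D j` are pairwise
disjoint, (ii) elements of `A j ∪ B j` never recur in later indices, and (iii) elements
of `C j ∪ D j` never recur in later `A`, `C`, `D` sets and recur in at most one later
`B` set, then `∑ j (4|A j| + 2|B j| + 2|C j| + 2|D j|) ≤ 4m`. -/
theorem collect_rounds_edge_accounting (E : Type*) [Fintype E] [DecidableEq E]
    (m l : ℕ) (hm : Fintype.card E = m) (A B C D : Fin l → Finset E)
    (hdisj : ∀ j, Disjoint (A j) (B j) ∧ Disjoint (A j) (C j) ∧ Disjoint (A j) (D j) ∧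
      Disjoint (B j) (C j) ∧ Disjoint (B j) (D j) ∧ Disjoint (C j) (D j))
    (hAB : ∀ j j' : Fin l, j < j' → ∀ e ∈ A j ∪ B j,
      e ∉ A j' ∧ e ∉ B j' ∧ e ∉ C j' ∧ e ∉ D j')
    (hCD : ∀ j j' : Fin l, j < j' → ∀ e ∈ C j ∪ D j, e ∉ A j' ∧ e ∉ C j' ∧ e ∉ D j')
    (hCDB : ∀ j : Fin l, ∀ e ∈ C j ∪ D j, ∀ j₁ j₂ : Fin l, j < j₁ → j < j₂ →
      e ∈ B j₁ → e ∈ B j₂ → j₁ = j₂) :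
    ∑ j : Fin l, (4 * (A j).card + 2 * (B j).card + 2 * (C j).card + 2 * (D j).card)
      ≤ 4 * m := by
  classical
  -- sum of an indicator over the universe
  have hcard : ∀ (s : Finset E) (c : ℕ),
      c * s.card = ∑ e : E, (if e ∈ s then c else 0) := by
    intro s c
    rw [Finset.sum_ite, Finset.sum_const, Finset.sum_const_zero, add_zero,
      Finset.filter_univ_mem, smul_eq_mul, mul_comm]
  -- per-element weight bound
  have key : ∀ e : E, ∑ j : Fin l,
      ((if e ∈ A j then 4 else 0) + (if e ∈ B j then 2 else 0)
        + (if e ∈ C j then 2 else 0) + (if e ∈ D j then 2 else 0)) ≤ 4 := by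
    intro e
    by_cases hA : ∃ j0, e ∈ A j0
    · obtain ⟨j0, hj0⟩ := hA
      have heq : ∀ j : Fin l,
          ((if e ∈ A j then 4 else 0) + (if e ∈ B j then 2 else 0)
            + (if e ∈ C j then 2 else 0) + (if e ∈ D j then 2 else 0))
          = if j = j0 then 4 else 0 := by
        intro j
        rcases lt_trichotomy j j0 with h | h | h
        · have h1 : e ∉ A j := fun hx => (hAB j j0 h e (by simp [hx])).1 hj0
          have h2 : e ∉ B j := fun hx => (hAB j j0 h e (by simp [hx])).1 hj0
          have h3 : e ∉ C j := fun hx => (hCD j j0 h e (by simp [hx])).1 hj0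
          have h4 : e ∉ D j := fun hx => (hCD j j0 h e (by simp [hx])).1 hj0
          simp [h1, h2, h3, h4, h.ne]
        · subst h
          obtain ⟨d1, d2, d3, _, _, _⟩ := hdisj j
          have h2 : e ∉ B j := fun hx => (Finset.disjoint_left.mp d1) hj0 hx
          have h3 : e ∉ C j := fun hx => (Finset.disjoint_left.mp d2) hj0 hx
          have h4 : e ∉ D j := fun hx => (Finset.disjoint_left.mp d3) hj0 hx
          simp [hj0, h2, h3, h4]
        · obtain ⟨h1, h2, h3, h4⟩ := hAB j0 j h e (by simp [hj0])
          simp [h1, h2, h3, h4, h.ne']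
      rw [Finset.sum_congr rfl (fun j _ => heq j), Finset.sum_ite_eq' Finset.univ j0]
      simp
    · push_neg at hA
      have hBone : (Finset.univ.filter (fun j => e ∈ B j)).card ≤ 1 := by
        apply Finset.card_le_one.mpr
        intro j1 h1 j2 h2
        simp only [Finset.mem_filter] at h1 h2
        rcases lt_trichotomy j1 j2 with h | h | h
        · exact absurd h2.2 ((hAB j1 j2 h e (by simp [h1.2])).2.1)
        · exact h
        · exact absurd h1.2 ((hAB j2 j1 h e (by simp [h2.2])).2.1)
      have hCDone : (Finset.univ.filter (fun j => e ∈ C j ∨ e ∈ D j)).card ≤ 1 := by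
        apply Finset.card_le_one.mpr
        intro j1 h1 j2 h2
        simp only [Finset.mem_filter] at h1 h2
        rcases lt_trichotomy j1 j2 with h | h | h
        · rcases h2.2 with hx | hx
          · exact absurd hx ((hCD j1 j2 h e (by simpa using h1.2)).2.1)
          · exact absurd hx ((hCD j1 j2 h e (by simpa using h1.2)).2.2)
        · exact h
        · rcases h1.2 with hx | hx
          · exact absurd hx ((hCD j2 j1 h e (by simpa using h2.2)).2.1)
          · exact absurd hx ((hCD j2 j1 h e (by simpa using h2.2)).2.2)
      have hterm : ∀ j : Fin l,
          ((if e ∈ A j then 4 else 0) + (if e ∈ B j then 2 else 0)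
            + (if e ∈ C j then 2 else 0) + (if e ∈ D j then 2 else 0))
          = (if e ∈ B j then 2 else 0) + (if e ∈ C j ∨ e ∈ D j then 2 else 0) := by
        intro j
        have hAj : e ∉ A j := hA j
        obtain ⟨_, _, _, _, _, d6⟩ := hdisj j
        by_cases hC : e ∈ C j
        · have hD : e ∉ D j := fun hx => (Finset.disjoint_left.mp d6) hC hx
          simp [hAj, hC, hD]
        · by_cases hD : e ∈ D j <;> simp [hAj, hC, hD]
      rw [Finset.sum_congr rfl (fun j _ => hterm j), Finset.sum_add_distrib]
      have hB2 : ∑ j : Fin l, (if e ∈ B j then 2 else 0) ≤ 2 := by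
        rw [Finset.sum_ite, Finset.sum_const, Finset.sum_const_zero, add_zero,
          smul_eq_mul]
        omega
      have hCD2 : ∑ j : Fin l, (if e ∈ C j ∨ e ∈ D j then 2 else 0) ≤ 2 := by
        rw [Finset.sum_ite, Finset.sum_const, Finset.sum_const_zero, add_zero,
          smul_eq_mul]
        omega
      omega
  calc ∑ j : Fin l, (4 * (A j).card + 2 * (B j).card + 2 * (C j).card + 2 * (D j).card)
      = ∑ j : Fin l, ∑ e : E,
          ((if e ∈ A j then 4 else 0) + (if e ∈ B j then 2 else 0)
            + (if e ∈ C j then 2 else 0) + (if e ∈ D j then 2 else 0)) := by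
        refine Finset.sum_congr rfl (fun j _ => ?_)
        simp only [Finset.sum_add_distrib]
        rw [← hcard, ← hcard, ← hcard, ← hcard]
    _ = ∑ e : E, ∑ j : Fin l,
          ((if e ∈ A j then 4 else 0) + (if e ∈ B j then 2 else 0)
            + (if e ∈ C j then 2 else 0) + (if e ∈ D j then 2 else 0)) :=
        Finset.sum_comm
    _ ≤ ∑ _e : E, 4 := Finset.sum_le_sum (fun e _ => key e)
    _ = 4 * m := by simp [mul_comm, hm]
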